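/- arXiv:2511.12741 — 3 statements merged into one kernel-verified Lean document; each statement's English description precedes it below -/
import Mathlib

section
/- Let s̃ > 0, let f : [s̃, ∞) → [0, ∞), and let K₁, K, C > 0 be constants with K·C ≤ 1/2. Assume that for every s ≥ s̃ one has f(2s) ≤ K₁/s + K·f(s) and f(s) ≤ C·f(2s). Then f(λ) ≤ 4K₁/λ for every λ ≥ 2s̃. -/
/-!
Feeding the reverse doubling bound into the forward one gives
`f(2s) ≤ K₁/s + K C f(2s) ≤ K₁/s + f(2s)/2`, so the nonnegative quantity `f(2s)` absorbs
its own contribution and `f(2s) ≤ 2K₁/s`; put `λ = 2s`.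
-/

lemma le_two_mul_of_le_add_mul {a c x : ℝ} (hc : c ≤ 1 / 2) (hx : 0 ≤ x)
    (h : x ≤ a + c * x) : x ≤ 2 * a := by
  nlinarith

lemma apply_two_mul_le_of_doubling {f : ℝ → ℝ} {K₁ K C s : ℝ} (hK : 0 ≤ K)
    (hKC : K * C ≤ 1 / 2) (hf : 0 ≤ f (2 * s))
    (h1 : f (2 * s) ≤ K₁ / s + K * f s) (h2 : f s ≤ C * f (2 * s)) :
    f (2 * s) ≤ 2 * (K₁ / s) := by
  refine le_two_mul_of_le_add_mul hKC hf ?_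
  calc f (2 * s) ≤ K₁ / s + K * f s := h1
    _ ≤ K₁ / s + K * (C * f (2 * s)) := by gcongr
    _ = K₁ / s + K * C * f (2 * s) := by ring

theorem decay_lemma_general (s₀ K₁ K C : ℝ) (hs₀ : 0 < s₀) (hK : 0 < K)
    (hKC : K * C ≤ 1 / 2)
    (f : ℝ → ℝ) (hf_nonneg : ∀ s, s₀ ≤ s → 0 ≤ f s)
    (h1 : ∀ s, s₀ ≤ s → f (2 * s) ≤ K₁ / s + K * f s)
    (h2 : ∀ s, s₀ ≤ s → f s ≤ C * f (2 * s)) :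
    ∀ lam, 2 * s₀ ≤ lam → f lam ≤ 4 * K₁ / lam := by
  intro lam hlam
  obtain ⟨s, rfl⟩ : ∃ s, lam = 2 * s := ⟨lam / 2, by ring⟩
  have hs : s₀ ≤ s := by linarith
  calc f (2 * s) ≤ 2 * (K₁ / s) :=
        apply_two_mul_le_of_doubling hK.le hKC (hf_nonneg _ (by linarith)) (h1 s hs) (h2 s hs)
    _ = 4 * K₁ / (2 * s) := by
        rw [show 4 * K₁ = 2 * (2 * K₁) by ring, mul_div_mul_left _ _ two_ne_zero, mul_div_assoc]

/-- elementary decay lemma. If `f : [s̃, ∞) → [0, ∞)` satisfies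
`f(2s) ≤ K₁/s + K f(s)` and `f(s) ≤ C f(2s)` for all `s ≥ s̃`, where `K C ≤ 1/2`, then
`f(λ) ≤ 4 K₁ / λ` for all `λ ≥ 2 s̃`. -/
theorem decay_lemma (s₀ K₁ K C : ℝ) (hs₀ : 0 < s₀) (hK₁ : 0 < K₁) (hK : 0 < K)
    (hC : 0 < C) (hKC : K * C ≤ 1 / 2)
    (f : ℝ → ℝ) (hf_nonneg : ∀ s, s₀ ≤ s → 0 ≤ f s)
    (h1 : ∀ s, s₀ ≤ s → f (2 * s) ≤ K₁ / s + K * f s)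
    (h2 : ∀ s, s₀ ≤ s → f s ≤ C * f (2 * s)) :
    ∀ lam, 2 * s₀ ≤ lam → f lam ≤ 4 * K₁ / lam :=
  decay_lemma_general s₀ K₁ K C hs₀ hK hKC f hf_nonneg h1 h2
end

section
/- (Radial differential inequality at a spherical minimum.) Let n ≥ 2, let U ⊆ ℝⁿ be open, let u : U → ℝ be twice continuously differentiable, and let x₀ ∈ U with x₀ ≠ 0; write r₀ = |x₀| and x̂₀ = x₀/r₀. Assume that u(x) ≥ u(x₀) for every x ∈ U with |x| = r₀, and that Δu(x₀) = ⟨B₀, ∇u(x₀)⟩ for some vector B₀ ∈ ℝⁿ. Then: (i) ∇u(x₀) = u_r · x̂₀ where u_r = ⟨∇u(x₀), x̂₀⟩ (the gradient is radial), and (ii) u_rr + ((n−1)/r₀) · u_r ≤ ⟨B₀, x̂₀⟩ · u_r, where u_rr = ⟨x̂₀, (Hess u)(x₀) x̂₀⟩ denotes the second derivative of u at x₀ in the radial direction. -/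
open Set Metric
open scoped RealInnerProductSpace

noncomputable section

abbrev Euc (n : ℕ) := EuclideanSpace ℝ (Fin n)

def lap {n : ℕ} (u : Euc n → ℝ) (x : Euc n) : ℝ :=
  ∑ i : Fin n,
    fderiv ℝ (fderiv ℝ u) x (EuclideanSpace.single i 1) (EuclideanSpace.single i 1)

/-!
Along a great circle `t ↦ cos t • x₀ + sin t • v` through `x₀` (with `v ⊥ x₀`, `‖v‖ = ‖x₀‖`)
`u` has a local minimum at `t = 0`, so the first and second derivative tests give
`Du(x₀) v = 0` and `D²u(x₀)(v, v) ≥ Du(x₀) x₀ = r₀ u_r`. The first makes the gradient radial; the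
second bounds every tangential diagonal entry of the Hessian below by `u_r / r₀`. Computing the
Laplacian, a trace and hence basis-independent, in an orthonormal basis containing `x̂₀` gives
`u_rr + (n - 1) u_r / r₀ ≤ Δu(x₀) = ⟨B₀, ∇u(x₀)⟩ = ⟨B₀, x̂₀⟩ u_r`.
-/

open Real Filter Topology Module

theorem IsLocalMin.deriv_deriv_nonneg {f : ℝ → ℝ} {a : ℝ} (hmin : IsLocalMin f a)
    (hc : ContinuousAt f a) : 0 ≤ deriv (deriv f) a := by
  by_contra! hneg
  -- otherwise `a` is also a local maximum, so `f` is locally constant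
  have hmax := isLocalMax_of_deriv_deriv_neg hneg hmin.deriv_eq_zero hc
  have hconst : f =ᶠ[𝓝 a] fun _ => f a :=
    (hmin.and hmax).mono fun _ hx => le_antisymm hx.2 hx.1
  have := hconst.deriv.deriv_eq
  simp only [deriv_const'] at this
  simp [this] at hneg

section InnerProductSpace

variable {E : Type*} [NormedAddCommGroup E] [InnerProductSpace ℝ E]

theorem IsLocalMin.comp_curve_second_order {u : E → ℝ} {c c' : ℝ → E} {a : E}
    (hu : ContDiffAt ℝ 2 u (c 0)) (hc : ∀ t, HasDerivAt c (c' t) t) (hc' : HasDerivAt c' a 0)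
    (hmin : IsLocalMin (u ∘ c) 0) :
    fderiv ℝ u (c 0) (c' 0) = 0 ∧
      0 ≤ fderiv ℝ (fderiv ℝ u) (c 0) (c' 0) (c' 0) + fderiv ℝ u (c 0) a := by
  have hdiff : ∀ᶠ t in 𝓝 0, DifferentiableAt ℝ u (c t) :=
    (hc 0).continuousAt.eventually
      ((hu.eventually (by simp)).mono fun _ hy => hy.differentiableAt (by norm_num))
  have hderiv : ∀ᶠ t in 𝓝 0, HasDerivAt (u ∘ c) (fderiv ℝ u (c t) (c' t)) t :=
    hdiff.mono fun t ht => ht.hasFDerivAt.comp_hasDerivAt t (hc t)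
  have hu' : HasFDerivAt (fderiv ℝ u) (fderiv ℝ (fderiv ℝ u) (c 0)) (c 0) :=
    ((hu.fderiv_right (m := 1) (by norm_num)).differentiableAt one_ne_zero).hasFDerivAt
  have hderiv2 : deriv (deriv (u ∘ c)) 0 =
      fderiv ℝ (fderiv ℝ u) (c 0) (c' 0) (c' 0) + fderiv ℝ u (c 0) a :=
    Filter.EventuallyEq.deriv_eq (hderiv.mono fun _ ht => ht.deriv) |>.trans
      ((hu'.comp_hasDerivAt 0 (hc 0)).clm_apply hc').deriv
  refine ⟨?_, hderiv2 ▸ hmin.deriv_deriv_nonneg hderiv.self_of_nhds.continuousAt⟩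
  rw [← hderiv.self_of_nhds.deriv, hmin.deriv_eq_zero]

theorem norm_cos_smul_add_sin_smul {x v : E} (hxv : ⟪x, v⟫ = 0) (hv : ‖v‖ = ‖x‖) (t : ℝ) :
    ‖cos t • x + sin t • v‖ = ‖x‖ := by
  have hpyth := norm_add_sq_eq_norm_sq_add_norm_sq_real
    (x := cos t • x) (y := sin t • v) (by simp [real_inner_smul_left, real_inner_smul_right, hxv])
  have hsq : ‖cos t • x + sin t • v‖ ^ 2 = ‖x‖ ^ 2 := by
    simp only [norm_smul, hv, Real.norm_eq_abs] at hpyth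
    nlinarith [sq_abs (cos t), sq_abs (sin t), sin_sq_add_cos_sq t]
  exact (sq_eq_sq₀ (norm_nonneg _) (norm_nonneg _)).1 hsq

theorem IsLocalMinOn.sphere_second_order_of_norm_eq {u : E → ℝ} {x v : E}
    (hmin : IsLocalMinOn u (sphere 0 ‖x‖) x) (hu : ContDiffAt ℝ 2 u x)
    (hxv : ⟪x, v⟫ = 0) (hv : ‖v‖ = ‖x‖) :
    fderiv ℝ u x v = 0 ∧ fderiv ℝ u x x ≤ fderiv ℝ (fderiv ℝ u) x v v := by
  set c : ℝ → E := fun t => cos t • x + sin t • v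
  have hc : ∀ t, HasDerivAt c ((-sin t) • x + cos t • v) t := fun t =>
    ((hasDerivAt_cos t).smul_const x).add ((hasDerivAt_sin t).smul_const v)
  have hc' : HasDerivAt (fun t => (-sin t) • x + cos t • v) (-x) 0 :=
    (((hasDerivAt_sin 0).neg.smul_const x).add ((hasDerivAt_cos 0).smul_const v)).congr_deriv
      (by simp)
  have hcurve : Tendsto c (𝓝 0) (𝓝[sphere 0 ‖x‖] x) :=
    tendsto_nhdsWithin_iff.2 ⟨by simpa [c] using (hc 0).continuousAt.tendsto,
      Eventually.of_forall fun t => by simp [c, norm_cos_smul_add_sin_smul hxv hv]⟩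
  have hmin' : IsMinFilter u (𝓝[sphere 0 ‖x‖] x) (c 0) := by
    rw [show c 0 = x by simp [c]]
    exact hmin
  have h := IsLocalMin.comp_curve_second_order (by simpa [c] using hu) hc hc'
    (hmin'.comp_tendsto hcurve)
  simp only [c, cos_zero, sin_zero, one_smul, zero_smul, add_zero, zero_add, neg_zero,
    map_neg] at h
  exact ⟨h.1, by linarith [h.2]⟩

theorem IsLocalMinOn.sphere_second_order {u : E → ℝ} {x v : E}
    (hmin : IsLocalMinOn u (sphere 0 ‖x‖) x) (hu : ContDiffAt ℝ 2 u x) (hx : x ≠ 0)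
    (hxv : ⟪x, v⟫ = 0) :
    fderiv ℝ u x v = 0 ∧ ‖v‖ ^ 2 * fderiv ℝ u x x ≤ ‖x‖ ^ 2 * fderiv ℝ (fderiv ℝ u) x v v := by
  rcases eq_or_ne v 0 with rfl | hv
  · simp
  have hv' : ‖v‖ ≠ 0 := norm_ne_zero_iff.2 hv
  obtain ⟨h₁, h₂⟩ := hmin.sphere_second_order_of_norm_eq hu (v := (‖x‖ / ‖v‖) • v)
    (by rw [real_inner_smul_right, hxv, mul_zero])
    (by rw [norm_smul, norm_div, norm_norm, norm_norm, div_mul_cancel₀ _ hv'])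
  simp only [map_smul, FunLike.coe_smul, Pi.smul_apply, smul_eq_mul] at h₁ h₂
  refine ⟨(mul_eq_zero.1 h₁).resolve_left (by positivity), ?_⟩
  have := mul_le_mul_of_nonneg_left h₂ (sq_nonneg ‖v‖)
  field_simp at this
  linarith

theorem eq_inner_smul_of_forall_inner_eq_zero {x g : E}
    (h : ∀ v, ⟪x, v⟫ = 0 → ⟪g, v⟫ = 0) : g = ⟪g, ‖x‖⁻¹ • x⟫ • (‖x‖⁻¹ • x) := by
  have hg : g ∈ (ℝ ∙ x) := by
    rw [← Submodule.orthogonal_orthogonal (ℝ ∙ x), Submodule.mem_orthogonal]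
    intro v hv
    rw [Submodule.mem_orthogonal_singleton_iff_inner_right] at hv
    rw [real_inner_comm, h v hv]
  calc g = (ℝ ∙ x).starProjection g := (Submodule.starProjection_eq_self_iff.2 hg).symm
    _ = _ := by
      rw [Submodule.starProjection_singleton, real_inner_smul_right, smul_smul, real_inner_comm,
        RCLike.ofReal_real_eq_id, id]
      congr 1
      field_simp

variable [FiniteDimensional ℝ E] {ι : Type*} [Fintype ι]

theorem OrthonormalBasis.sum_apply_self_eq_trace (H : E →L[ℝ] E →L[ℝ] ℝ)
    (b : OrthonormalBasis ι ℝ E) :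
    ∑ i, H (b i) (b i) =
      LinearMap.trace ℝ E (InnerProductSpace.continuousLinearMapOfBilin H : E →ₗ[ℝ] E) := by
  rw [LinearMap.trace_eq_sum_inner _ b]
  refine Finset.sum_congr rfl fun i _ => ?_
  rw [real_inner_comm, ContinuousLinearMap.coe_coe,
    InnerProductSpace.continuousLinearMapOfBilin_apply]

theorem OrthonormalBasis.add_mul_le_sum_apply_self (H : E →L[ℝ] E →L[ℝ] ℝ)
    (b : OrthonormalBasis ι ℝ E) {e : E} (he : ‖e‖ = 1) {m : ℝ}
    (hm : ∀ v, ‖v‖ = 1 → ⟪e, v⟫ = 0 → m ≤ H v v) :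
    H e e + (finrank ℝ E - 1 : ℝ) * m ≤ ∑ i, H (b i) (b i) := by
  classical
  obtain ⟨s, d, hes, hd⟩ := ((orthonormal_subsingleton_iff (𝕜 := ℝ)).2 fun i : ({e} : Set E) =>
    by rw [Subsingleton.elim i ⟨e, rfl⟩, he]).exists_orthonormalBasis_extension
  set i₀ : s := ⟨e, hes rfl⟩
  have hdi₀ : d i₀ = e := by simp [hd, i₀]
  have hcard : (finrank ℝ E : ℝ) - 1 = ((Finset.univ.erase i₀).card : ℝ) := by
    rw [finrank_eq_card_basis d.toBasis, Finset.card_erase_of_mem (Finset.mem_univ _),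
      Finset.card_univ, Nat.cast_pred (Fintype.card_pos_iff.2 ⟨i₀⟩)]
  rw [b.sum_apply_self_eq_trace, ← d.sum_apply_self_eq_trace,
    ← Finset.add_sum_erase _ _ (Finset.mem_univ i₀), hdi₀, hcard]
  gcongr
  rw [← nsmul_eq_mul]
  refine Finset.card_nsmul_le_sum _ _ _ fun i hi => hm _ (d.orthonormal.1 i) ?_
  rw [← hdi₀]
  exact d.orthonormal.2 (Finset.ne_of_mem_erase hi).symm

end InnerProductSpace

theorem radial_inequality_at_spherical_min_general
    (n : ℕ) (U : Set (Euc n)) (hU : IsOpen U)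
    (u : Euc n → ℝ) (hu : ContDiffOn ℝ 2 u U)
    (x₀ : Euc n) (hx₀U : x₀ ∈ U) (hx₀ : x₀ ≠ 0) (B₀ : Euc n)
    (hmin : ∀ x ∈ U, ‖x‖ = ‖x₀‖ → u x₀ ≤ u x)
    (heq : lap u x₀ = ⟪B₀, gradient u x₀⟫) :
    gradient u x₀ = ⟪gradient u x₀, ‖x₀‖⁻¹ • x₀⟫ • (‖x₀‖⁻¹ • x₀) ∧
    fderiv ℝ (fderiv ℝ u) x₀ (‖x₀‖⁻¹ • x₀) (‖x₀‖⁻¹ • x₀)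
        + ((n : ℝ) - 1) / ‖x₀‖ * ⟪gradient u x₀, ‖x₀‖⁻¹ • x₀⟫
      ≤ ⟪B₀, ‖x₀‖⁻¹ • x₀⟫ * ⟪gradient u x₀, ‖x₀‖⁻¹ • x₀⟫ := by
  have hr : 0 < ‖x₀‖ := norm_pos_iff.2 hx₀
  have hsphere : IsLocalMinOn u (sphere 0 ‖x₀‖) x₀ :=
    mem_nhdsWithin.2 ⟨U, hU, hx₀U, fun x ⟨hxU, hxs⟩ => hmin x hxU (by simpa using hxs)⟩
  have hC : ContDiffAt ℝ 2 u x₀ := hu.contDiffAt (hU.mem_nhds hx₀U)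
  have hradial : gradient u x₀ = ⟪gradient u x₀, ‖x₀‖⁻¹ • x₀⟫ • (‖x₀‖⁻¹ • x₀) :=
    eq_inner_smul_of_forall_inner_eq_zero fun v hv => by
      rw [inner_gradient_left, (hsphere.sphere_second_order hC hx₀ hv).1]
  refine ⟨hradial, ?_⟩
  set e := ‖x₀‖⁻¹ • x₀ with he
  set ur := ⟪gradient u x₀, e⟫
  have hlower : ∀ v, ‖v‖ = 1 → ⟪e, v⟫ = 0 → ur / ‖x₀‖ ≤ fderiv ℝ (fderiv ℝ u) x₀ v v := by
    intro v hv hev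
    have hx₀v : ⟪x₀, v⟫ = 0 := by
      simpa [he, real_inner_smul_left, hr.ne'] using hev
    have h := (hsphere.sphere_second_order hC hx₀ hx₀v).2
    rw [hv, ← inner_gradient_left, hradial, real_inner_smul_left, he, real_inner_smul_left,
      real_inner_self_eq_norm_sq] at h
    field_simp at h
    rw [div_le_iff₀ hr]
    nlinarith
  have htrace : fderiv ℝ (fderiv ℝ u) x₀ e e + ((n : ℝ) - 1) * (ur / ‖x₀‖) ≤ lap u x₀ := by
    unfold lap
    simpa only [finrank_euclideanSpace_fin, EuclideanSpace.basisFun_apply] using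
      (EuclideanSpace.basisFun (Fin n) ℝ).add_mul_le_sum_apply_self _
        (by simp [he, norm_smul, hr.ne']) hlower
  have hlap : lap u x₀ = ⟪B₀, e⟫ * ur := by
    rw [heq, hradial, real_inner_smul_right, mul_comm]
  rw [div_mul_eq_mul_div, mul_div_assoc]
  linarith

/-- radial differential inequality at a spherical minimum: if `u` is `C²`
on an open set `U`, `x₀ ∈ U \ {0}` minimizes `u` over `{x ∈ U : |x| = |x₀|}`, and
`Δu(x₀) = ⟨B₀, ∇u(x₀)⟩`, then the gradient at `x₀` is radial,
`∇u(x₀) = u_r x̂₀` with `u_r = ⟨∇u(x₀), x̂₀⟩`, and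
`u_rr + ((n-1)/r₀) u_r ≤ ⟨B₀, x̂₀⟩ u_r` with `u_rr = ⟨x̂₀, Hess u(x₀) x̂₀⟩`. -/
theorem radial_inequality_at_spherical_min
    (n : ℕ) (hn : 2 ≤ n) (U : Set (Euc n)) (hU : IsOpen U)
    (u : Euc n → ℝ) (hu : ContDiffOn ℝ 2 u U)
    (x₀ : Euc n) (hx₀U : x₀ ∈ U) (hx₀ : x₀ ≠ 0) (B₀ : Euc n)
    (hmin : ∀ x ∈ U, ‖x‖ = ‖x₀‖ → u x₀ ≤ u x)
    (heq : lap u x₀ = ⟪B₀, gradient u x₀⟫) :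
    gradient u x₀ = ⟪gradient u x₀, ‖x₀‖⁻¹ • x₀⟫ • (‖x₀‖⁻¹ • x₀) ∧
    fderiv ℝ (fderiv ℝ u) x₀ (‖x₀‖⁻¹ • x₀) (‖x₀‖⁻¹ • x₀)
        + ((n : ℝ) - 1) / ‖x₀‖ * ⟪gradient u x₀, ‖x₀‖⁻¹ • x₀⟫
      ≤ ⟪B₀, ‖x₀‖⁻¹ • x₀⟫ * ⟪gradient u x₀, ‖x₀‖⁻¹ • x₀⟫ :=
  radial_inequality_at_spherical_min_general n U hU u hu x₀ hx₀U hx₀ B₀ hmin heq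
end
end

section
/- (Radial differential inequality at a spherical maximum.) Let n ≥ 2, let U ⊆ ℝⁿ be open, let u : U → ℝ be twice continuously differentiable, and let x₀ ∈ U with x₀ ≠ 0; write r₀ = |x₀| and x̂₀ = x₀/r₀. Assume that u(x) ≤ u(x₀) for every x ∈ U with |x| = r₀, and that Δu(x₀) = ⟨B₀, ∇u(x₀)⟩ for some vector B₀ ∈ ℝⁿ. Then: (i) ∇u(x₀) = u_r · x̂₀ where u_r = ⟨∇u(x₀), x̂₀⟩ (the gradient is radial), and (ii) u_rr + ((n−1)/r₀) · u_r ≥ ⟨B₀, x̂₀⟩ · u_r, where u_rr = ⟨x̂₀, (Hess u)(x₀) x̂₀⟩ denotes the second derivative of u at x₀ in the radial direction. -/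
/-!
For a unit vector `v ⟂ x₀`, the great circle `t ↦ cos t • x₀ + sin t • (r₀ • v)` stays on the
sphere of radius `r₀` and passes through `x₀` with velocity `r₀ • v` and acceleration `-x₀`.
Along it `u` has a local maximum at `t = 0`, so the first derivative `r₀ ∂ᵥu(x₀)` vanishes and
the second derivative `r₀² ∂ᵥ²u(x₀) - ⟨∇u(x₀), x₀⟩` is nonpositive. Hence the gradient is
radial, and summing the second inequality over an orthonormal basis completing `x̂₀` (the trace
of the Hessian does not depend on the orthonormal basis) gives
`Δu(x₀) ≤ u_rr + ((n - 1) / r₀) u_r`, whereas `Δu(x₀) = ⟨B₀, ∇u(x₀)⟩ = ⟨B₀, x̂₀⟩ u_r`.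
-/

open Set Metric
open scoped RealInnerProductSpace

noncomputable section

open Filter Topology

theorem IsLocalMax.secondDeriv_nonpos {f f' : ℝ → ℝ} {a c : ℝ} (hmax : IsLocalMax f a)
    (hf : ∀ᶠ t in 𝓝 a, HasDerivAt f (f' t) t) (hf' : HasDerivAt f' c a) : c ≤ 0 := by
  -- if `c > 0`, then `f' > 0` just to the right of `a`, so `f` increases there
  by_contra! hc
  have hf'a : f' a = 0 := hmax.hasDerivAt_eq_zero hf.self_of_nhds
  have hpos : ∀ᶠ t in 𝓝[>] a, 0 < f' t := by
    have hslope := (hasDerivAt_iff_tendsto_slope.mp hf').eventually (eventually_gt_nhds hc)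
    filter_upwards [nhdsGT_le_nhdsNE a hslope, self_mem_nhdsWithin] with t ht hta
    exact pos_of_slope_pos hta ht hf'a
  obtain ⟨b, hab, hb⟩ := mem_nhdsGT_iff_exists_Ioo_subset.mp
    (hpos.and (nhdsWithin_le_nhds (hf.and hmax)))
  obtain ⟨t, hat, htb⟩ := exists_between (show a < b from hab)
  have hcont : ContinuousOn f (Icc a t) := by
    intro s hs
    rcases hs.1.eq_or_lt with rfl | has
    · exact hf.self_of_nhds.continuousAt.continuousWithinAt
    · exact (hb ⟨has, hs.2.trans_lt htb⟩).2.1.continuousAt.continuousWithinAt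
  obtain ⟨ξ, hξ, hξ_eq⟩ := exists_hasDerivAt_eq_slope f f' hat hcont
    fun s hs => (hb ⟨hs.1, hs.2.trans htb⟩).2.1
  have hξ_pos : 0 < f' ξ := (hb ⟨hξ.1, hξ.2.trans htb⟩).1
  have hslope_nonpos : (f t - f a) / (t - a) ≤ 0 :=
    div_nonpos_of_nonpos_of_nonneg (sub_nonpos.mpr (hb ⟨hat, htb⟩).2.2) (sub_nonneg.mpr hat.le)
  linarith

section GreatCircle

variable {E : Type*} [NormedAddCommGroup E] [InnerProductSpace ℝ E]

def greatCircle (x w : E) (t : ℝ) : E := Real.cos t • x + Real.sin t • w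

@[simp]
theorem greatCircle_zero (x w : E) : greatCircle x w 0 = x := by simp [greatCircle]

theorem hasDerivAt_greatCircle (x w : E) (t : ℝ) :
    HasDerivAt (greatCircle x w) (greatCircle w (-x) t) t := by
  refine (((Real.hasDerivAt_cos t).smul_const x).add
    ((Real.hasDerivAt_sin t).smul_const w)).congr_deriv ?_
  rw [greatCircle, smul_neg, neg_smul, add_comm]

theorem continuous_greatCircle (x w : E) : Continuous (greatCircle x w) :=
  continuous_iff_continuousAt.mpr fun t => (hasDerivAt_greatCircle x w t).continuousAt

theorem norm_greatCircle {x w : E} (hw : ‖w‖ = ‖x‖) (hxw : ⟪x, w⟫ = 0) (t : ℝ) :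
    ‖greatCircle x w t‖ = ‖x‖ := by
  have hsq : ‖greatCircle x w t‖ ^ 2 = ‖x‖ ^ 2 := by
    rw [greatCircle, norm_add_sq_real, inner_smul_left, inner_smul_right, hxw, norm_smul,
      norm_smul, hw, Real.norm_eq_abs, Real.norm_eq_abs, mul_pow, mul_pow, sq_abs, sq_abs]
    linear_combination ‖x‖ ^ 2 * Real.sin_sq_add_cos_sq t
  exact (pow_left_inj₀ (norm_nonneg _) (norm_nonneg _) two_ne_zero).mp hsq

variable {u : E → ℝ} {x w : E}

theorem IsLocalMaxOn.isLocalMax_comp_greatCircle (hmax : IsLocalMaxOn u (sphere 0 ‖x‖) x)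
    (hw : ‖w‖ = ‖x‖) (hxw : ⟪x, w⟫ = 0) : IsLocalMax (u ∘ greatCircle x w) 0 := by
  refine IsMaxFilter.comp_tendsto (by rwa [greatCircle_zero]) (tendsto_nhdsWithin_iff.mpr ⟨?_, ?_⟩)
  · simpa using (continuous_greatCircle x w).tendsto 0
  · exact Eventually.of_forall fun t => by simp [norm_greatCircle hw hxw]

theorem IsLocalMaxOn.fderiv_apply_eq_zero_of_sphere
    (hmax : IsLocalMaxOn u (sphere 0 ‖x‖) x) (hu : DifferentiableAt ℝ u x)
    (hw : ‖w‖ = ‖x‖) (hxw : ⟪x, w⟫ = 0) : fderiv ℝ u x w = 0 := by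
  have h := (hmax.isLocalMax_comp_greatCircle hw hxw).hasDerivAt_eq_zero
    ((greatCircle_zero x w ▸ hu.hasFDerivAt).comp_hasDerivAt 0 (hasDerivAt_greatCircle x w 0))
  simpa using h

theorem IsLocalMaxOn.fderiv_fderiv_apply_le_of_sphere
    (hmax : IsLocalMaxOn u (sphere 0 ‖x‖) x) (hu : ContDiffAt ℝ 2 u x)
    (hw : ‖w‖ = ‖x‖) (hxw : ⟪x, w⟫ = 0) : fderiv ℝ (fderiv ℝ u) x w w ≤ fderiv ℝ u x x := by
  have hγ : Tendsto (greatCircle x w) (𝓝 0) (𝓝 x) := by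
    simpa using (continuous_greatCircle x w).tendsto 0
  have hdiff : ∀ᶠ t in 𝓝 0, DifferentiableAt ℝ u (greatCircle x w t) :=
    hγ.eventually ((hu.eventually (by simp)).mono fun y hy => hy.differentiableAt two_ne_zero)
  have hH : HasFDerivAt (fderiv ℝ u) (fderiv ℝ (fderiv ℝ u) (greatCircle x w 0))
      (greatCircle x w 0) := by
    rw [greatCircle_zero]
    exact ((hu.fderiv_right (by norm_num)).differentiableAt one_ne_zero).hasFDerivAt
  have h := (hmax.isLocalMax_comp_greatCircle hw hxw).secondDeriv_nonpos
    (hdiff.mono fun t ht => ht.hasFDerivAt.comp_hasDerivAt t (hasDerivAt_greatCircle x w t))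
    ((hH.comp_hasDerivAt 0 (hasDerivAt_greatCircle x w 0)).clm_apply
      (hasDerivAt_greatCircle w (-x) 0))
  simp only [Function.comp_apply, greatCircle_zero, map_neg] at h
  linarith

end GreatCircle

theorem exists_orthonormalBasis_apply_eq {𝕜 E ι : Type*} [RCLike 𝕜] [NormedAddCommGroup E]
    [InnerProductSpace 𝕜 E] [FiniteDimensional 𝕜 E] [Fintype ι]
    (hcard : Module.finrank 𝕜 E = Fintype.card ι) (i : ι) {v : E} (hv : ‖v‖ = 1) :
    ∃ b : OrthonormalBasis ι 𝕜 E, b i = v := by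
  have hv' : Orthonormal 𝕜 (({i} : Set ι).domRestrict fun _ => v) :=
    ⟨fun _ => hv, fun j k hjk => absurd (Subsingleton.elim j k) hjk⟩
  obtain ⟨b, hb⟩ := hv'.exists_orthonormalBasis_extension_of_card_eq hcard
  exact ⟨b, hb i rfl⟩

theorem OrthonormalBasis.eq_inner_smul_of_inner_eq_zero {𝕜 E ι : Type*} [RCLike 𝕜]
    [NormedAddCommGroup E] [InnerProductSpace 𝕜 E] [Fintype ι] (b : OrthonormalBasis ι 𝕜 E)
    {y : E} {i₀ : ι} (hy : ∀ i ≠ i₀, inner 𝕜 (b i) y = 0) : y = inner 𝕜 (b i₀) y • b i₀ := by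
  conv_lhs => rw [← b.sum_repr' y]
  exact Finset.sum_eq_single i₀ (fun i _ hi => by rw [hy i hi, zero_smul]) (by simp)

theorem OrthonormalBasis.sum_apply_apply_self_eq {E ι ι' : Type*} [NormedAddCommGroup E]
    [InnerProductSpace ℝ E] [CompleteSpace E] [Fintype ι] [Fintype ι'] (H : E →L[ℝ] E →L[ℝ] ℝ)
    (b : OrthonormalBasis ι ℝ E) (c : OrthonormalBasis ι' ℝ E) :
    ∑ i, H (b i) (b i) = ∑ j, H (c j) (c j) := by
  set T := InnerProductSpace.continuousLinearMapOfBilin (𝕜 := ℝ) H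
  have hT : ∀ v, H v v = ⟪v, T v⟫ := fun v => by
    rw [real_inner_comm, InnerProductSpace.continuousLinearMapOfBilin_apply]
  simp only [hT]
  exact (LinearMap.trace_eq_sum_inner (T : E →ₗ[ℝ] E) b).symm.trans
    (LinearMap.trace_eq_sum_inner _ c)

theorem lap_eq_sum_orthonormalBasis {n : ℕ} {ι : Type*} [Fintype ι] (u : Euc n → ℝ) (x : Euc n)
    (b : OrthonormalBasis ι ℝ (Euc n)) : lap u x = ∑ i, fderiv ℝ (fderiv ℝ u) x (b i) (b i) := by
  simpa [lap, EuclideanSpace.basisFun_apply] using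
    (EuclideanSpace.basisFun (Fin n) ℝ).sum_apply_apply_self_eq (fderiv ℝ (fderiv ℝ u) x) b

section SphericalMax

variable {E ι : Type*} [NormedAddCommGroup E] [InnerProductSpace ℝ E] [Fintype ι]
  {u : E → ℝ} {x : E} {b : OrthonormalBasis ι ℝ E} {i₀ : ι}

theorem OrthonormalBasis.ne_zero_of_apply_eq_inv_norm_smul (hb : b i₀ = ‖x‖⁻¹ • x) : x ≠ 0 := by
  rintro rfl
  simpa [hb] using b.norm_eq_one i₀

theorem OrthonormalBasis.eq_norm_smul_of_apply_eq_inv_norm_smul (hb : b i₀ = ‖x‖⁻¹ • x) :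
    x = ‖x‖ • b i₀ := by
  rw [hb, smul_inv_smul₀ (norm_ne_zero_iff.mpr (b.ne_zero_of_apply_eq_inv_norm_smul hb))]

theorem OrthonormalBasis.inner_norm_smul_eq_zero_of_apply_eq_inv_norm_smul
    (hb : b i₀ = ‖x‖⁻¹ • x) {i : ι} (hi : i ≠ i₀) : ⟪x, ‖x‖ • b i⟫ = 0 := by
  rw [b.eq_norm_smul_of_apply_eq_inv_norm_smul hb, inner_smul_left, inner_smul_right,
    b.inner_eq_zero hi.symm]
  simp

variable (b) in
theorem OrthonormalBasis.norm_norm_smul_apply (i : ι) : ‖‖x‖ • b i‖ = ‖x‖ := by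
  simp [norm_smul, b.norm_eq_one]

variable [CompleteSpace E]

theorem IsLocalMaxOn.gradient_eq_inner_smul_of_sphere
    (hmax : IsLocalMaxOn u (sphere 0 ‖x‖) x) (hu : DifferentiableAt ℝ u x)
    (hb : b i₀ = ‖x‖⁻¹ • x) : gradient u x = ⟪gradient u x, b i₀⟫ • b i₀ := by
  have hx := b.ne_zero_of_apply_eq_inv_norm_smul hb
  rw [real_inner_comm]
  refine b.eq_inner_smul_of_inner_eq_zero fun i hi => ?_
  have h := hmax.fderiv_apply_eq_zero_of_sphere hu (b.norm_norm_smul_apply i)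
    (b.inner_norm_smul_eq_zero_of_apply_eq_inv_norm_smul hb hi)
  rwa [map_smul, smul_eq_mul, mul_eq_zero, or_iff_right (norm_ne_zero_iff.mpr hx),
    ← inner_gradient_left, real_inner_comm] at h

theorem IsLocalMaxOn.sum_fderiv_fderiv_le_of_sphere [DecidableEq ι]
    (hmax : IsLocalMaxOn u (sphere 0 ‖x‖) x) (hu : ContDiffAt ℝ 2 u x)
    (hb : b i₀ = ‖x‖⁻¹ • x) :
    ∑ i ∈ Finset.univ.erase i₀, fderiv ℝ (fderiv ℝ u) x (b i) (b i)
      ≤ ((Fintype.card ι : ℝ) - 1) / ‖x‖ * ⟪gradient u x, b i₀⟫ := by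
  have hr : 0 < ‖x‖ := norm_pos_iff.mpr (b.ne_zero_of_apply_eq_inv_norm_smul hb)
  have hur : ⟪gradient u x, b i₀⟫ = fderiv ℝ u x x / ‖x‖ := by
    rw [hb, inner_gradient_left, map_smul, smul_eq_mul, inv_mul_eq_div]
  calc ∑ i ∈ Finset.univ.erase i₀, fderiv ℝ (fderiv ℝ u) x (b i) (b i)
      ≤ ∑ _i ∈ Finset.univ.erase i₀, ⟪gradient u x, b i₀⟫ / ‖x‖ :=
        Finset.sum_le_sum fun i hi => by
          have h := hmax.fderiv_fderiv_apply_le_of_sphere hu (b.norm_norm_smul_apply i)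
            (b.inner_norm_smul_eq_zero_of_apply_eq_inv_norm_smul hb (Finset.ne_of_mem_erase hi))
          simp only [map_smul, smul_apply, smul_eq_mul] at h
          rw [hur, div_div, le_div_iff₀ (by positivity)]
          linarith
    _ = ((Fintype.card ι : ℝ) - 1) / ‖x‖ * ⟪gradient u x, b i₀⟫ := by
        rw [Finset.sum_const, Finset.card_erase_of_mem (Finset.mem_univ _), Finset.card_univ,
          nsmul_eq_mul, Nat.cast_pred (Fintype.card_pos_iff.mpr ⟨i₀⟩)]
        ring

end SphericalMax

theorem radial_inequality_at_spherical_max_general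
    (n : ℕ) (U : Set (Euc n)) (hU : IsOpen U)
    (u : Euc n → ℝ) (hu : ContDiffOn ℝ 2 u U)
    (x₀ : Euc n) (hx₀U : x₀ ∈ U) (hx₀ : x₀ ≠ 0) (B₀ : Euc n)
    (hmax : ∀ x ∈ U, ‖x‖ = ‖x₀‖ → u x ≤ u x₀)
    (heq : lap u x₀ = ⟪B₀, gradient u x₀⟫) :
    gradient u x₀ = ⟪gradient u x₀, ‖x₀‖⁻¹ • x₀⟫ • (‖x₀‖⁻¹ • x₀) ∧
    ⟪B₀, ‖x₀‖⁻¹ • x₀⟫ * ⟪gradient u x₀, ‖x₀‖⁻¹ • x₀⟫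
      ≤ fderiv ℝ (fderiv ℝ u) x₀ (‖x₀‖⁻¹ • x₀) (‖x₀‖⁻¹ • x₀)
        + ((n : ℝ) - 1) / ‖x₀‖ * ⟪gradient u x₀, ‖x₀‖⁻¹ • x₀⟫ := by
  have hloc : IsLocalMaxOn u (sphere 0 ‖x₀‖) x₀ :=
    mem_of_superset (inter_mem_nhdsWithin _ (hU.mem_nhds hx₀U))
      fun y hy => hmax y hy.2 (by simpa using hy.1)
  have hu₀ : ContDiffAt ℝ 2 u x₀ := hu.contDiffAt (hU.mem_nhds hx₀U)
  obtain ⟨i₀, -⟩ : ∃ i, x₀ i ≠ 0 := by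
    by_contra! h
    exact hx₀ (by ext i; simp [h i])
  have he : ‖‖x₀‖⁻¹ • x₀‖ = 1 := norm_smul_inv_norm (𝕜 := ℝ) hx₀
  obtain ⟨b, hb⟩ := exists_orthonormalBasis_apply_eq (𝕜 := ℝ) (by simp) i₀ he
  have hradial := hloc.gradient_eq_inner_smul_of_sphere (hu₀.differentiableAt two_ne_zero) hb
  rw [← hb]
  refine ⟨hradial, ?_⟩
  calc ⟪B₀, b i₀⟫ * ⟪gradient u x₀, b i₀⟫ = lap u x₀ := by
        rw [heq]
        conv_rhs => rw [hradial, real_inner_smul_right]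
        exact mul_comm _ _
    _ = fderiv ℝ (fderiv ℝ u) x₀ (b i₀) (b i₀)
          + ∑ i ∈ Finset.univ.erase i₀, fderiv ℝ (fderiv ℝ u) x₀ (b i) (b i) := by
        rw [lap_eq_sum_orthonormalBasis u x₀ b]
        exact (Finset.add_sum_erase _ _ (Finset.mem_univ i₀)).symm
    _ ≤ _ := by
        gcongr
        simpa only [Fintype.card_fin] using hloc.sum_fderiv_fderiv_le_of_sphere hu₀ hb

/-- radial differential inequality at a spherical maximum: if `u` is `C²`
on an open set `U`, `x₀ ∈ U \ {0}` maximizes `u` over `{x ∈ U : |x| = |x₀|}`, and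
`Δu(x₀) = ⟨B₀, ∇u(x₀)⟩`, then the gradient at `x₀` is radial,
`∇u(x₀) = u_r x̂₀` with `u_r = ⟨∇u(x₀), x̂₀⟩`, and
`u_rr + ((n-1)/r₀) u_r ≤ ⟨B₀, x̂₀⟩ u_r` with `u_rr = ⟨x̂₀, Hess u(x₀) x̂₀⟩`. -/
theorem radial_inequality_at_spherical_max
    (n : ℕ) (hn : 2 ≤ n) (U : Set (Euc n)) (hU : IsOpen U)
    (u : Euc n → ℝ) (hu : ContDiffOn ℝ 2 u U)
    (x₀ : Euc n) (hx₀U : x₀ ∈ U) (hx₀ : x₀ ≠ 0) (B₀ : Euc n)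
    (hmax : ∀ x ∈ U, ‖x‖ = ‖x₀‖ → u x ≤ u x₀)
    (heq : lap u x₀ = ⟪B₀, gradient u x₀⟫) :
    gradient u x₀ = ⟪gradient u x₀, ‖x₀‖⁻¹ • x₀⟫ • (‖x₀‖⁻¹ • x₀) ∧
    ⟪B₀, ‖x₀‖⁻¹ • x₀⟫ * ⟪gradient u x₀, ‖x₀‖⁻¹ • x₀⟫
      ≤ fderiv ℝ (fderiv ℝ u) x₀ (‖x₀‖⁻¹ • x₀) (‖x₀‖⁻¹ • x₀)
        + ((n : ℝ) - 1) / ‖x₀‖ * ⟪gradient u x₀, ‖x₀‖⁻¹ • x₀⟫ :=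
  radial_inequality_at_spherical_max_general n U hU u hu x₀ hx₀U hx₀ B₀ hmax heq
end
end
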